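/- Let p be a prime, G a finite group, S a Sylow p-subgroup of G, and Q ≤ S a large p-subgroup of G (C_G(Q) ≤ Q and N_G(U) ≤ N_G(Q) for every nontrivial subgroup U of C_G(Q)) such that Q contains every normal p-subgroup of N_G(Q). Let L be a subgroup of G with S ≤ L, and let V be a normal p-subgroup of L with V ≤ S and V not contained in Q. Set D = ⟨V^{N_G(Q)}⟩(L ∩ N_G(Q)) and W = ⟨(V ∩ Q)^D⟩. Then: (i) ⟨V^D⟩ is not a p-group; (ii) [Q, ⟨V^D⟩] ≤ W; and (iii) W does not centralize V, i.e. W is not contained in C_G(V). -/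

import Mathlib

/-!
Largeness first gives `S ≤ N_G(Q)`: a nontrivial subgroup of `Z(S)` centralizes `Q` and is
normalized by `S`.

(i) If `⟨V^D⟩` were a `p`-group, it and all its `N_G(Q)`-conjugates would be normal `p`-subgroups
of `M = ⟨V^{N_G(Q)}⟩ ≤ D`, hence contained in one Sylow subgroup of `M`. So `M` would be a
`p`-group normalized by `N_G(Q)`, hence `V ≤ M ≤ Q`.

(ii) `[Q, V] ≤ Q ∩ V`, and `D` normalizes both `Q` and `W`.

(iii) If `W` centralizes `V`, it is centralized by `⟨V^D⟩`. For `x ∈ ⟨V^D⟩` and `q ∈ Q` the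
commutator `c = [q, x] ∈ W ≤ Q` then commutes with `x`, so `(q x q⁻¹)^|Q| = c^|Q| x^|Q| = x^|Q|`.
Hence `x^|Q| ∈ C_G(Q) ≤ Q`, so `x` has `p`-power order, contradicting (i).
-/

/-- A `p`-subgroup `Q` of a group is *large* if `C_G(Q) ≤ Q` and `N_G(U) ≤ N_G(Q)` for
every nontrivial subgroup `U` of `C_G(Q)`. -/
def IsLargeSubgroup (p : ℕ) {G : Type*} [Group G] (Q : Subgroup G) : Prop :=
  IsPGroup p Q ∧ Subgroup.centralizer (Q : Set G) ≤ Q ∧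
    ∀ U : Subgroup G, U ≠ ⊥ → U ≤ Subgroup.centralizer (Q : Set G) →
      Subgroup.normalizer (U : Set G) ≤ Subgroup.normalizer (Q : Set G)

/-- `conjClosure A H = ⟨A^H⟩`, the subgroup generated by all `H`-conjugates of `A`. -/
def conjClosure {G : Type*} [Group G] (A H : Subgroup G) : Subgroup G :=
  Subgroup.closure {x : G | ∃ h ∈ H, ∃ a ∈ A, x = h * a * h⁻¹}

open Subgroup
open scoped commutatorElement

section ConjClosure

variable {G : Type*} [Group G] {A H K : Subgroup G}

theorem conjClosure_le_iff : conjClosure A H ≤ K ↔ ∀ h ∈ H, ∀ a ∈ A, h * a * h⁻¹ ∈ K := by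
  simp only [conjClosure, closure_le, Set.subset_def, Set.mem_ofPred_eq]
  constructor
  · exact fun hK h hh a ha => hK _ ⟨h, hh, a, ha, rfl⟩
  · rintro hK _ ⟨h, hh, a, ha, rfl⟩
    exact hK h hh a ha

theorem le_conjClosure (A H : Subgroup G) : A ≤ conjClosure A H := fun a ha =>
  subset_closure ⟨1, one_mem H, a, ha, by group⟩

theorem le_normalizer_conjClosure (A H : Subgroup G) :
    H ≤ normalizer (conjClosure A H : Set G) := by
  refine fun h hh => normalizer_le_normalizer_closure _ ?_
  rw [mem_set_normalizer_iff]
  intro x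
  constructor
  · rintro ⟨g, hg, a, ha, rfl⟩
    exact ⟨h * g, mul_mem hh hg, a, ha, by group⟩
  · rintro ⟨g, hg, a, ha, hx⟩
    refine ⟨h⁻¹ * g, mul_mem (inv_mem hh) hg, a, ha, ?_⟩
    rw [show x = h⁻¹ * (h * x * h⁻¹) * h by group, hx]
    group

theorem conj_mem_conjClosure {g x : G} (hg : g ∈ H) (hx : x ∈ conjClosure A H) :
    g * x * g⁻¹ ∈ conjClosure A H :=
  (mem_normalizer_iff.mp (le_normalizer_conjClosure A H hg) x).mp hx

theorem conjClosure_le (hA : A ≤ K) (hH : H ≤ normalizer (K : Set G)) : conjClosure A H ≤ K :=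
  conjClosure_le_iff.mpr fun _ hh a ha => (mem_normalizer_iff.mp (hH hh) a).mp (hA ha)

end ConjClosure

section Commutators

variable {G : Type*} [Group G]

theorem normalizer_le_normalizer_centralizer (H : Subgroup G) :
    normalizer (H : Set G) ≤ normalizer (centralizer (H : Set G) : Set G) := by
  intro g hg
  rw [mem_normalizer_iff]
  intro x
  simp only [mem_centralizer_iff]
  constructor
  · intro hx h hh
    have := hx (g⁻¹ * h * g) ((mem_normalizer_iff''.mp hg h).mp hh)
    calc h * (g * x * g⁻¹) = g * ((g⁻¹ * h * g) * x) * g⁻¹ := by group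
      _ = g * (x * (g⁻¹ * h * g)) * g⁻¹ := by rw [this]
      _ = g * x * g⁻¹ * h := by group
  · intro hx h hh
    have := hx (g * h * g⁻¹) ((mem_normalizer_iff.mp hg h).mp hh)
    calc h * x = g⁻¹ * ((g * h * g⁻¹) * (g * x * g⁻¹)) * g := by group
      _ = g⁻¹ * ((g * x * g⁻¹) * (g * h * g⁻¹)) * g := by rw [this]
      _ = x * h := by group

theorem commutator_le_inf_of_le_normalizer {H K : Subgroup G} (hHK : H ≤ normalizer (K : Set G))
    (hKH : K ≤ normalizer (H : Set G)) : ⁅H, K⁆ ≤ H ⊓ K := by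
  rw [commutator_le]
  intro h hh k hk
  rw [commutatorElement_def, mem_inf]
  constructor
  · rw [show h * k * h⁻¹ * k⁻¹ = h * (k * h⁻¹ * k⁻¹) by group]
    exact mul_mem hh ((mem_normalizer_iff.mp (hKH hk) _).mp (inv_mem hh))
  · exact mul_mem ((mem_normalizer_iff.mp (hHK hh) k).mp hk) (inv_mem hk)

theorem commutator_conjClosure_le {Q A H W : Subgroup G} (hHQ : H ≤ normalizer (Q : Set G))
    (hHW : H ≤ normalizer (W : Set G)) (hAW : A ≤ normalizer (W : Set G)) (hQA : ⁅Q, A⁆ ≤ W) :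
    ⁅Q, conjClosure A H⁆ ≤ W := by
  have hNW : conjClosure A H ≤ normalizer (W : Set G) :=
    conjClosure_le hAW (hHW.trans le_normalizer)
  rw [commutator_le]
  intro q hq x hx
  induction hx using closure_induction generalizing q with
  | mem _ hy =>
    obtain ⟨h, hh, a, ha, rfl⟩ := hy
    have hc : ⁅h⁻¹ * q * h, a⁆ ∈ W :=
      commutator_le.mp hQA _ ((mem_normalizer_iff''.mp (hHQ hh) q).mp hq) a ha
    rw [show ⁅q, h * a * h⁻¹⁆ = h * ⁅h⁻¹ * q * h, a⁆ * h⁻¹ by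
      simp only [commutatorElement_def]; group]
    exact (mem_normalizer_iff.mp (hHW hh) _).mp hc
  | one => simpa only [commutatorElement_one_right] using one_mem W
  | mul x y hx _ ihx ihy =>
    rw [show ⁅q, x * y⁆ = ⁅q, x⁆ * (x * ⁅q, y⁆ * x⁻¹) by
      simp only [commutatorElement_def]; group]
    exact mul_mem (ihx q hq) ((mem_normalizer_iff.mp (hNW hx) _).mp (ihy q hq))
  | inv x hx ihx =>
    rw [show ⁅q, x⁻¹⁆ = x⁻¹ * ⁅q, x⁆⁻¹ * x⁻¹⁻¹ by
      simp only [commutatorElement_def]; group]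
    exact (mem_normalizer_iff.mp (hNW (inv_mem hx)) _).mp (inv_mem (ihx q hq))

end Commutators

section PGroups

variable {p : ℕ} {G : Type*} [Group G]

theorem IsPGroup.le_map_subtype_sylow {P K : Subgroup G} (hP : IsPGroup p P) (hPK : P ≤ K)
    (hKP : K ≤ normalizer (P : Set G)) (T : Sylow p K) : P ≤ (T : Subgroup K).map K.subtype := by
  have : (P.comap K.subtype).Normal := (normal_subgroupOf_iff_le_normalizer hPK).mpr hKP
  rw [← map_subgroupOf_eq_of_le hPK]
  exact map_mono (hP.comap_subtype.le_sylow_of_normal T)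

theorem isPGroup_conjClosure_of_normal [Fact p.Prime] {A H P : Subgroup G} (hP : IsPGroup p P)
    (hAP : A ≤ P) (hPK : P ≤ conjClosure A H) (hKP : conjClosure A H ≤ normalizer (P : Set G)) :
    IsPGroup p (conjClosure A H) := by
  set K := conjClosure A H
  obtain ⟨T⟩ : Nonempty (Sylow p K) := inferInstance
  refine (T.isPGroup'.map K.subtype).to_le (conjClosure_le_iff.mpr fun h hh a ha => ?_)
  set Ph := P.map (MulAut.conj h).toMonoidHom
  have hK : K.map (MulAut.conj h).toMonoidHom = K :=
    mem_normalizer_iff_map_conj_eq.mp (le_normalizer_conjClosure A H hh)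
  have hPhK : Ph ≤ K := (map_mono hPK).trans_eq hK
  have hKPh : K ≤ normalizer (Ph : Set G) := by
    rw [← map_equiv_normalizer_eq, ← hK]
    exact map_mono hKP
  exact (hP.map _).le_map_subtype_sylow hPhK hKPh T (mem_map_of_mem _ (hAP ha))

theorem IsPGroup.conjClosure_of_le [Fact p.Prime] {V N D : Subgroup G}
    (hP : IsPGroup p (conjClosure V D)) (hDN : D ≤ N) (hND : conjClosure V N ≤ D) :
    IsPGroup p (conjClosure V N) :=
  isPGroup_conjClosure_of_normal hP (le_conjClosure V D)
    (conjClosure_le (le_conjClosure V N) (hDN.trans (le_normalizer_conjClosure V N)))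
    (hND.trans (le_normalizer_conjClosure V D))

theorem IsLargeSubgroup.le_normalizer_of_le [Fact p.Prime] {Q P : Subgroup G} [Finite P]
    (hQ : IsLargeSubgroup p Q) (hP : IsPGroup p P) (hQP : Q ≤ P) :
    P ≤ normalizer (Q : Set G) := by
  rcases subsingleton_or_nontrivial P with _ | _
  · rw [P.eq_bot_of_subsingleton]
    exact bot_le
  have := hP.center_nontrivial
  set Z := (center P).map P.subtype
  have hZ : Z ≠ ⊥ := by
    rw [Ne, map_eq_bot_iff_of_injective _ P.subtype_injective]
    exact (nontrivial_iff_ne_bot _).mp this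
  have hZQ : Z ≤ centralizer (Q : Set G) := by
    rintro _ ⟨z, hz, rfl⟩
    exact mem_centralizer_iff.mpr fun q hq =>
      congrArg Subtype.val (mem_center_iff.mp hz ⟨q, hQP hq⟩)
  have hPZ : P ≤ centralizer (Z : Set G) := by
    intro x hx
    rw [mem_centralizer_iff]
    rintro _ ⟨z, hz, rfl⟩
    exact (congrArg Subtype.val (mem_center_iff.mp hz ⟨x, hx⟩)).symm
  exact hPZ.trans ((centralizer_le_normalizer _).trans (hQ.2.2 Z hZ hZQ))

theorem isPGroup_of_commutator_le_of_le_centralizer [Fact p.Prime] {Q W X : Subgroup G}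
    [Finite Q] (hQ : IsPGroup p Q) (hCQ : centralizer (Q : Set G) ≤ Q) (hWQ : W ≤ Q)
    (hQX : ⁅Q, X⁆ ≤ W) (hXW : X ≤ centralizer (W : Set G)) : IsPGroup p X := by
  obtain ⟨m, hm⟩ := hQ.exists_card_eq
  have hexp : ∀ y ∈ Q, y ^ p ^ m = 1 := fun y hy =>
    orderOf_dvd_iff_pow_eq_one.mp (hm ▸ Q.orderOf_dvd_natCard hy)
  rintro ⟨x, hx⟩
  have hxQ : x ^ p ^ m ∈ Q := hCQ <| mem_centralizer_iff.mpr fun q hq => by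
    have hc : ⁅q, x⁆ ∈ W := commutator_le.mp hQX q hq x hx
    have hcx : Commute ⁅q, x⁆ x := mem_centralizer_iff.mp (hXW hx) _ hc
    calc q * x ^ p ^ m = (q * x * q⁻¹) ^ p ^ m * q := by rw [conj_pow]; group
      _ = (⁅q, x⁆ * x) ^ p ^ m * q := by rw [commutatorElement_def]; group
      _ = x ^ p ^ m * q := by rw [hcx.mul_pow, hexp _ (hWQ hc), one_mul]
  exact ⟨m + m, Subtype.ext (by simp [pow_add, pow_mul, hexp _ hxQ])⟩

end PGroups

theorem stmt12_general {p : ℕ} (hp : p.Prime) {G : Type*} [Group G] [Finite G]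
    (S : Sylow p G) (Q : Subgroup G) (hQS : Q ≤ S) (hQ : IsLargeSubgroup p Q)
    (hQop : ∀ N : Subgroup G, IsPGroup p N → N ≤ Subgroup.normalizer (Q : Set G) →
      (∀ g ∈ Subgroup.normalizer (Q : Set G), ∀ n ∈ N, g * n * g⁻¹ ∈ N) → N ≤ Q)
    (L : Subgroup G) (hSL : (S : Subgroup G) ≤ L)
    (V : Subgroup G) (hVS : V ≤ S)
    (hVnormL : ∀ l ∈ L, ∀ v ∈ V, l * v * l⁻¹ ∈ V)
    (hVQ : ¬ V ≤ Q)
    (D : Subgroup G) (hD : D = conjClosure V (Subgroup.normalizer (Q : Set G)) ⊔ (L ⊓ Subgroup.normalizer (Q : Set G)))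
    (W : Subgroup G) (hW : W = conjClosure (V ⊓ Q) D) :
    ¬ IsPGroup p (conjClosure V D) ∧
    ⁅Q, conjClosure V D⁆ ≤ W ∧
    ¬ W ≤ Subgroup.centralizer (V : Set G) := by
  have : Fact p.Prime := ⟨hp⟩
  set NQ := normalizer (Q : Set G)
  have hSN : (S : Subgroup G) ≤ NQ := hQ.le_normalizer_of_le S.isPGroup' hQS
  have hVN : V ≤ NQ := hVS.trans hSN
  have hMN : conjClosure V NQ ≤ NQ := conjClosure_le hVN le_normalizer
  have hDN : D ≤ NQ := hD ▸ sup_le hMN inf_le_right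
  have hMD : conjClosure V NQ ≤ D := hD ▸ le_sup_left
  have hDW : D ≤ normalizer (W : Set G) := hW ▸ le_normalizer_conjClosure _ _
  have hVD : V ≤ D := hD ▸ hVS.trans (le_sup_of_le_right (le_inf hSL hSN))
  have hQV : Q ≤ normalizer (V : Set G) := fun q hq =>
    mem_normalizer_fintype (hVnormL q (hSL (hQS hq)))
  have hnotp : ¬ IsPGroup p (conjClosure V D) := fun hP =>
    hVQ <| (le_conjClosure V NQ).trans <|
      hQop _ (hP.conjClosure_of_le hDN hMD) hMN fun _ hg _ hx => conj_mem_conjClosure hg hx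
  have hVQW : V ⊓ Q ≤ W := hW ▸ le_conjClosure _ _
  have hcomm : ⁅Q, conjClosure V D⁆ ≤ W := commutator_conjClosure_le hDN hDW (hVD.trans hDW) <|
    ((commutator_le_inf_of_le_normalizer hQV hVN).trans_eq (inf_comm Q V)).trans hVQW
  refine ⟨hnotp, hcomm, fun hWV => hnotp ?_⟩
  have hWQ : W ≤ Q := hW ▸ conjClosure_le inf_le_right hDN
  exact isPGroup_of_commutator_le_of_le_centralizer hQ.1 hQ.2.1 hWQ hcomm <|
    conjClosure_le (le_centralizer_iff.mp hWV)
      (hDW.trans (normalizer_le_normalizer_centralizer W))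

/-- Let `G` be a finite group, `S` a Sylow `p`-subgroup, `Q ≤ S` a large
`p`-subgroup of `G` containing every normal `p`-subgroup of `N_G(Q)`.  Let `L ≥ S` be a
subgroup and `V ≤ S` a normal `p`-subgroup of `L` with `V ≰ Q`.  Set
`D = ⟨V^{N_G(Q)}⟩(L ∩ N_G(Q))` and `W = ⟨(V ∩ Q)^D⟩`.  Then (i) `⟨V^D⟩` is not a
`p`-group; (ii) `[Q, ⟨V^D⟩] ≤ W`; and (iii) `W ≰ C_G(V)`. -/
theorem stmt12 {p : ℕ} (hp : p.Prime) {G : Type*} [Group G] [Finite G]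
    (S : Sylow p G) (Q : Subgroup G) (hQS : Q ≤ S) (hQ : IsLargeSubgroup p Q)
    (hQop : ∀ N : Subgroup G, IsPGroup p N → N ≤ Subgroup.normalizer (Q : Set G) →
      (∀ g ∈ Subgroup.normalizer (Q : Set G), ∀ n ∈ N, g * n * g⁻¹ ∈ N) → N ≤ Q)
    (L : Subgroup G) (hSL : (S : Subgroup G) ≤ L)
    (V : Subgroup G) (hVS : V ≤ S) (hVp : IsPGroup p V)
    (hVnormL : ∀ l ∈ L, ∀ v ∈ V, l * v * l⁻¹ ∈ V)
    (hVL : V ≤ L)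
    (hVQ : ¬ V ≤ Q)
    (D : Subgroup G) (hD : D = conjClosure V (Subgroup.normalizer (Q : Set G)) ⊔ (L ⊓ Subgroup.normalizer (Q : Set G)))
    (W : Subgroup G) (hW : W = conjClosure (V ⊓ Q) D) :
    ¬ IsPGroup p (conjClosure V D) ∧
    ⁅Q, conjClosure V D⁆ ≤ W ∧
    ¬ W ≤ Subgroup.centralizer (V : Set G) :=
  stmt12_general hp S Q hQS hQ hQop L hSL V hVS hVnormL hVQ D hD W hW
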